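/- arXiv:1811.00892 — 4 statements merged into one kernel-verified Lean document; each statement's English description precedes it below -/
import Mathlib

section
/- Suppose each disutility function c_i is strictly convex and continuously differentiable (Assumption 1) and the OLC problem is feasible (Assumption 2). If (ω*, d*, P*, ψ*) is an optimal solution of the reformulated OLC problem, then ω*_i = 0 for all i ∈ N. -/
/-!
The swing-equation constraint (a) is the only one involving `ω` and `P`. Given any feasible
point, replace `P` by the DC flows `B_ij (ψ_i − ψ_j)` on the internal lines (zero on the others)
and `ω` by `0`: constraint (c) turns (a) into an identity, and the disutility term is unchanged.
Optimality then bounds `∑ D_i ω*_i²` by `0`, and `D_i > 0` forces `ω* = 0`.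
-/

open Finset

/-- Net outflow of the line quantity `P` at bus `i` over the line set `Es`:
`∑_{j : ij ∈ Es} P_ij − ∑_{k : ki ∈ Es} P_ki`. -/
noncomputable def netOut {N : Type*} [DecidableEq N]
    (Es : Finset (N × N)) (P : N × N → ℝ) (i : N) : ℝ :=
  (∑ e ∈ Es.filter (fun e => e.1 = i), P e) -
    ∑ e ∈ Es.filter (fun e => e.2 = i), P e

/-- Feasibility for the OLC problem (3). -/
def OLCFeasible {N : Type*} [Fintype N] [DecidableEq N]
    (E Ein : Finset (N × N)) (B : N × N → ℝ) (Pin dlo dhi : N → ℝ)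
    (Plo Phi : N × N → ℝ) (d θ : N → ℝ) : Prop :=
  (∀ i, d i = Pin i - netOut Ein (fun e => B e * (θ e.1 - θ e.2)) i) ∧
  (∀ i, dlo i ≤ d i ∧ d i ≤ dhi i) ∧
  (∀ e ∈ E, Plo e ≤ B e * (θ e.1 - θ e.2) ∧ B e * (θ e.1 - θ e.2) ≤ Phi e)

/-- Feasibility for the reformulated OLC problem (4). -/
def ReformFeasible {N : Type*} [Fintype N] [DecidableEq N]
    (E Ein : Finset (N × N)) (B : N × N → ℝ) (D Pin dlo dhi : N → ℝ)
    (Plo Phi : N × N → ℝ) (d ω : N → ℝ) (P : N × N → ℝ) (ψ : N → ℝ) : Prop :=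
  (∀ i, d i = Pin i - D i * ω i - netOut E P i) ∧
  (∀ i, dlo i ≤ d i ∧ d i ≤ dhi i) ∧
  (∀ i, d i = Pin i - netOut Ein (fun e => B e * (ψ e.1 - ψ e.2)) i) ∧
  (∀ e ∈ E, Plo e ≤ B e * (ψ e.1 - ψ e.2) ∧ B e * (ψ e.1 - ψ e.2) ≤ Phi e)

theorem netOut_ite_mem_of_subset {N : Type*} [DecidableEq N] {Es Es' : Finset (N × N)}
    (h : Es' ⊆ Es) (P : N × N → ℝ) (i : N) :
    netOut Es (fun e => if e ∈ Es' then P e else 0) i = netOut Es' P i := by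
  simp only [netOut, sum_ite_mem, filter_inter, inter_eq_right.mpr h]

theorem ReformFeasible.of_zero_frequency {N : Type*} [Fintype N] [DecidableEq N]
    {E Ein : Finset (N × N)} (hEin : Ein ⊆ E) {B : N × N → ℝ} {D Pin dlo dhi : N → ℝ}
    {Plo Phi : N × N → ℝ} {d ω : N → ℝ} {P : N × N → ℝ} {ψ : N → ℝ}
    (h : ReformFeasible E Ein B D Pin dlo dhi Plo Phi d ω P ψ) :
    ReformFeasible E Ein B D Pin dlo dhi Plo Phi d 0
      (fun e => if e ∈ Ein then B e * (ψ e.1 - ψ e.2) else 0) ψ := by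
  obtain ⟨-, hd, hflow, hlim⟩ := h
  refine ⟨fun i => ?_, hd, hflow, hlim⟩
  rw [netOut_ite_mem_of_subset hEin, Pi.zero_apply, mul_zero, sub_zero]
  exact hflow i

theorem eq_zero_of_sum_mul_sq_nonpos {ι : Type*} [Fintype ι] {D x : ι → ℝ}
    (hD : ∀ i, 0 < D i) (h : ∑ i, D i * x i ^ 2 ≤ 0) (i : ι) : x i = 0 := by
  have hnonneg : ∀ j ∈ (univ : Finset ι), 0 ≤ D j * x j ^ 2 :=
    fun j _ => mul_nonneg (hD j).le (sq_nonneg _)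
  have hi : D i * x i ^ 2 = 0 :=
    (sum_eq_zero_iff_of_nonneg hnonneg).mp (h.antisymm (sum_nonneg hnonneg)) i (mem_univ i)
  simpa [(hD i).ne'] using hi

theorem optimal_reform_frequency_zero_general
    {N : Type*} [Fintype N] [DecidableEq N]
    (E Ein : Finset (N × N)) (hEin : Ein ⊆ E)
    (B : N × N → ℝ)
    (D Pin dlo dhi : N → ℝ) (hD : ∀ i, 0 < D i)
    (Plo Phi : N × N → ℝ)
    (c : N → ℝ → ℝ)
    -- (ω*, d*, P*, ψ*) is an optimal solution of the reformulated OLC problem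
    (ωs ds : N → ℝ) (Ps : N × N → ℝ) (ψs : N → ℝ)
    (hfeass : ReformFeasible E Ein B D Pin dlo dhi Plo Phi ds ωs Ps ψs)
    (hopt : ∀ d ω P ψ, ReformFeasible E Ein B D Pin dlo dhi Plo Phi d ω P ψ →
      (∑ i, c i (ds i)) + (1/2) * ∑ i, D i * (ωs i) ^ 2 ≤
        (∑ i, c i (d i)) + (1/2) * ∑ i, D i * (ω i) ^ 2) :
    ∀ i, ωs i = 0 := by
  have hle := hopt _ _ _ _ (hfeass.of_zero_frequency hEin)
  simp only [Pi.zero_apply, ne_eq, OfNat.ofNat_ne_zero, not_false_eq_true, zero_pow, mul_zero,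
    sum_const_zero, add_zero] at hle
  exact eq_zero_of_sum_mul_sq_nonpos hD (by linarith)

/-- first half of Lemma 1: under Assumptions 1 and 2, any optimal solution
`(ω*, d*, P*, ψ*)` of the reformulated OLC problem has `ω*_i = 0` for all buses `i`. -/
theorem optimal_reform_frequency_zero
    {N : Type*} [Fintype N] [DecidableEq N]
    (E Ein : Finset (N × N)) (hEin : Ein ⊆ E)
    (B : N × N → ℝ) (hB : ∀ e ∈ E, 0 < B e)
    (D Pin dlo dhi : N → ℝ) (hD : ∀ i, 0 < D i)
    (hdlim : ∀ i, dlo i ≤ dhi i)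
    (Plo Phi : N × N → ℝ) (hPlim : ∀ e ∈ E, Plo e ≤ Phi e)
    (c : N → ℝ → ℝ)
    -- Assumption 1: each cᵢ is strictly convex and continuously differentiable
    (hconv : ∀ i, StrictConvexOn ℝ Set.univ (c i))
    (hdiff : ∀ i, ContDiff ℝ 1 (c i))
    -- Assumption 2: the OLC problem is feasible
    (hfeas : ∃ d θ, OLCFeasible E Ein B Pin dlo dhi Plo Phi d θ)
    -- (ω*, d*, P*, ψ*) is an optimal solution of the reformulated OLC problem
    (ωs ds : N → ℝ) (Ps : N × N → ℝ) (ψs : N → ℝ)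
    (hfeass : ReformFeasible E Ein B D Pin dlo dhi Plo Phi ds ωs Ps ψs)
    (hopt : ∀ d ω P ψ, ReformFeasible E Ein B D Pin dlo dhi Plo Phi d ω P ψ →
      (∑ i, c i (ds i)) + (1/2) * ∑ i, D i * (ωs i) ^ 2 ≤
        (∑ i, c i (d i)) + (1/2) * ∑ i, D i * (ω i) ^ 2) :
    ∀ i, ωs i = 0 :=
  optimal_reform_frequency_zero_general E Ein hEin B D Pin dlo dhi hD Plo Phi c ωs ds Ps ψs hfeass
    hopt
end

section
/- Suppose each disutility function c_i is strictly convex and continuously differentiable (Assumption 1) and the OLC problem is feasible (Assumption 2). If (ω*, d*, P*, ψ*) is an optimal solution of the reformulated OLC problem, then d* is an optimal solution of the OLC problem; precisely, (d*, ψ*) is feasible for the OLC problem and Σ_{i∈N} c_i(d*_i) ≤ Σ_{i∈N} c_i(d_i) for every (d, θ) feasible for the OLC problem. -/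
open Finset

/-! Every OLC-feasible point `(d, θ)` is feasible for the reformulated problem with `ω = 0`,
where its cost is just `∑ cᵢ(dᵢ)`; the frequency penalty of the optimum is nonnegative, so
`∑ cᵢ(d*ᵢ) ≤ ∑ cᵢ(dᵢ)`. Feasibility of `(d*, ψ*)` is part of the reformulated constraints. -/

lemma netOut_ite_mem {N : Type*} [DecidableEq N] {E Ein : Finset (N × N)} (hEin : Ein ⊆ E)
    (f : N × N → ℝ) (i : N) :
    netOut E (fun e => if e ∈ Ein then f e else 0) i = netOut Ein f i := by
  simp only [netOut, sum_ite_mem, filter_inter, inter_eq_right.2 hEin]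

section Feasibility

variable {N : Type*} [Fintype N] [DecidableEq N] {E Ein : Finset (N × N)} {B : N × N → ℝ}
  {D Pin dlo dhi : N → ℝ} {Plo Phi : N × N → ℝ}

lemma ReformFeasible.olcFeasible {d ω ψ : N → ℝ} {P : N × N → ℝ}
    (h : ReformFeasible E Ein B D Pin dlo dhi Plo Phi d ω P ψ) :
    OLCFeasible E Ein B Pin dlo dhi Plo Phi d ψ :=
  ⟨h.2.2.1, h.2.1, h.2.2.2⟩

lemma OLCFeasible.reformFeasible_zero_freq (hEin : Ein ⊆ E) {d θ : N → ℝ}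
    (h : OLCFeasible E Ein B Pin dlo dhi Plo Phi d θ) :
    ReformFeasible E Ein B D Pin dlo dhi Plo Phi d 0
      (fun e => if e ∈ Ein then B e * (θ e.1 - θ e.2) else 0) θ := by
  obtain ⟨hflow, hlim, hline⟩ := h
  refine ⟨fun i => ?_, hlim, hflow, hline⟩
  rw [netOut_ite_mem hEin, Pi.zero_apply, mul_zero, sub_zero]
  exact hflow i

end Feasibility

theorem optimal_reform_is_optimal_OLC_general
    {N : Type*} [Fintype N] [DecidableEq N]
    (E Ein : Finset (N × N)) (hEin : Ein ⊆ E)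
    (B : N × N → ℝ)
    (D Pin dlo dhi : N → ℝ) (hD : ∀ i, 0 < D i)
    (Plo Phi : N × N → ℝ)
    (c : N → ℝ → ℝ)
    -- (ω*, d*, P*, ψ*) is an optimal solution of the reformulated OLC problem
    (ωs ds : N → ℝ) (Ps : N × N → ℝ) (ψs : N → ℝ)
    (hfeass : ReformFeasible E Ein B D Pin dlo dhi Plo Phi ds ωs Ps ψs)
    (hopt : ∀ d ω P ψ, ReformFeasible E Ein B D Pin dlo dhi Plo Phi d ω P ψ →
      (∑ i, c i (ds i)) + (1/2) * ∑ i, D i * (ωs i) ^ 2 ≤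
        (∑ i, c i (d i)) + (1/2) * ∑ i, D i * (ω i) ^ 2) :
    OLCFeasible E Ein B Pin dlo dhi Plo Phi ds ψs ∧
      ∀ d θ, OLCFeasible E Ein B Pin dlo dhi Plo Phi d θ →
        (∑ i, c i (ds i)) ≤ ∑ i, c i (d i) := by
  refine ⟨hfeass.olcFeasible, fun d θ hdθ => ?_⟩
  have hωs : 0 ≤ ∑ i, D i * ωs i ^ 2 :=
    sum_nonneg fun i _ => mul_nonneg (hD i).le (sq_nonneg _)
  have hcmp := hopt d 0 _ θ (hdθ.reformFeasible_zero_freq hEin)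
  simp only [Pi.zero_apply, zero_pow two_ne_zero, mul_zero, sum_const_zero, add_zero] at hcmp
  linarith

/-- second half of Lemma 1: under Assumptions 1 and 2, if `(ω*, d*, P*, ψ*)`
is optimal for the reformulated OLC problem, then `(d*, ψ*)` is feasible for the OLC problem
and `d*` minimizes the total disutility among all OLC-feasible points. -/
theorem optimal_reform_is_optimal_OLC
    {N : Type*} [Fintype N] [DecidableEq N]
    (E Ein : Finset (N × N)) (hEin : Ein ⊆ E)
    (B : N × N → ℝ) (hB : ∀ e ∈ E, 0 < B e)
    (D Pin dlo dhi : N → ℝ) (hD : ∀ i, 0 < D i)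
    (hdlim : ∀ i, dlo i ≤ dhi i)
    (Plo Phi : N × N → ℝ) (hPlim : ∀ e ∈ E, Plo e ≤ Phi e)
    (c : N → ℝ → ℝ)
    -- Assumption 1: each cᵢ is strictly convex and continuously differentiable
    (hconv : ∀ i, StrictConvexOn ℝ Set.univ (c i))
    (hdiff : ∀ i, ContDiff ℝ 1 (c i))
    -- Assumption 2: the OLC problem is feasible
    (hfeas : ∃ d θ, OLCFeasible E Ein B Pin dlo dhi Plo Phi d θ)
    -- (ω*, d*, P*, ψ*) is an optimal solution of the reformulated OLC problem
    (ωs ds : N → ℝ) (Ps : N × N → ℝ) (ψs : N → ℝ)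
    (hfeass : ReformFeasible E Ein B D Pin dlo dhi Plo Phi ds ωs Ps ψs)
    (hopt : ∀ d ω P ψ, ReformFeasible E Ein B D Pin dlo dhi Plo Phi d ω P ψ →
      (∑ i, c i (ds i)) + (1/2) * ∑ i, D i * (ωs i) ^ 2 ≤
        (∑ i, c i (d i)) + (1/2) * ∑ i, D i * (ω i) ^ 2) :
    OLCFeasible E Ein B Pin dlo dhi Plo Phi ds ψs ∧
      ∀ d θ, OLCFeasible E Ein B Pin dlo dhi Plo Phi d θ →
        (∑ i, c i (ds i)) ≤ ∑ i, c i (d i) :=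
  optimal_reform_is_optimal_OLC_general E Ein hEin B D Pin dlo dhi hD Plo Phi c ωs ds Ps ψs hfeass
    hopt
end

section
/- Let S = U_S Σ_S U_Sᵀ be a compact eigendecomposition of a positive semidefinite matrix S (Σ_S a positive-definite diagonal matrix, U_S with orthonormal columns), and let σ_S^min > 0 be the smallest diagonal entry of Σ_S. If α > 0 and β > 0 satisfy (2 − β − 4β⁵/α²)·(σ_S^min)² ≥ β, then the matrix T_ψ := 2β·S·S − β²·U_S U_Sᵀ − β²·S·S − (4β⁶/α²)·S·S is positive semidefinite. -/
open Matrix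

/-! On the range of `U_S` the matrices `S * S` and `U_S * U_Sᵀ` are simultaneously diagonal, so
`T_ψ = U_S * diagonal d * U_Sᵀ` with `d k = β * ((2 - β - 4β⁵/α²) * σ_k² - β)`. Each `d k` is
nonnegative because `σ_k ≥ σ_S^min > 0` and the hypothesis is exactly `d k ≥ 0` at `σ_S^min`. -/

namespace Matrix

variable {m ι R : Type*} [Fintype ι] [DecidableEq ι]

def diagonalConj [CommSemiring R] (U : Matrix m ι R) : (ι → R) →ₗ[R] Matrix m m R where
  toFun d := U * diagonal d * Uᵀ
  map_add' a b := by rw [← Matrix.add_mul, ← Matrix.mul_add, diagonal_add]; rfl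
  map_smul' c d := by rw [diagonal_smul, Matrix.mul_smul, Matrix.smul_mul]; rfl

@[simp]
theorem diagonalConj_apply [CommSemiring R] (U : Matrix m ι R) (d : ι → R) :
    diagonalConj U d = U * diagonal d * Uᵀ := rfl

theorem diagonalConj_one [CommSemiring R] (U : Matrix m ι R) :
    diagonalConj U 1 = U * Uᵀ := by
  rw [diagonalConj_apply, diagonal_one', Matrix.mul_one]

theorem diagonalConj_mul_diagonalConj [Fintype m] [CommSemiring R] {U : Matrix m ι R}
    (hU : Uᵀ * U = 1) (a b : ι → R) :
    diagonalConj U a * diagonalConj U b = diagonalConj U (a * b) := by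
  calc U * diagonal a * Uᵀ * (U * diagonal b * Uᵀ)
      = U * diagonal a * (Uᵀ * U) * diagonal b * Uᵀ := by simp only [Matrix.mul_assoc]
    _ = U * diagonal (a * b) * Uᵀ := by
      rw [hU, Matrix.mul_one, Matrix.mul_assoc U, diagonal_mul_diagonal]; rfl

theorem posSemidef_diagonalConj [Fintype m] (U : Matrix m ι ℝ) {d : ι → ℝ} (hd : 0 ≤ d) :
    (diagonalConj U d).PosSemidef := by
  simpa using (posSemidef_diagonal_iff.mpr hd).mul_mul_conjTranspose_same U

end Matrix

theorem mul_sub_nonneg_of_le_mul_sq {β c σ s : ℝ} (hβ : 0 ≤ β) (hσ : 0 ≤ σ) (hσs : σ ≤ s)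
    (h : β ≤ c * σ ^ 2) : 0 ≤ β * (c * s ^ 2 - β) := by
  rcases hβ.eq_or_lt with rfl | hβ
  · simp
  have hc : 0 < c := pos_of_mul_pos_left (hβ.trans_le h) (sq_nonneg σ)
  have : c * σ ^ 2 ≤ c * s ^ 2 := by gcongr
  exact mul_nonneg hβ.le (by linarith)

theorem Tpsi_posSemidef_general
    {n rS : ℕ}
    (S : Matrix (Fin n) (Fin n) ℝ)
    (US : Matrix (Fin n) (Fin rS) ℝ) (SigS : Fin rS → ℝ)
    (hSigS : ∀ k, 0 < SigS k)
    (hSdec : S = US * Matrix.diagonal SigS * USᵀ)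
    (hUS : USᵀ * US = 1)
    -- σ_S^min is the smallest diagonal entry of Σ_S
    (σmin : ℝ) (hσmin_le : ∀ k, σmin ≤ SigS k) (hσmin_mem : ∃ k, SigS k = σmin)
    (α β : ℝ) (hβ : 0 < β)
    (hcond : β ≤ (2 - β - 4 * β ^ 5 / α ^ 2) * σmin ^ 2) :
    ((2 * β) • (S * S) - (β ^ 2) • (US * USᵀ) - (β ^ 2) • (S * S) -
      (4 * β ^ 6 / α ^ 2) • (S * S)).PosSemidef := by
  obtain ⟨k₀, rfl⟩ := hσmin_mem
  have hSS : S * S = diagonalConj US (SigS ^ 2) := by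
    rw [hSdec, ← diagonalConj_apply, diagonalConj_mul_diagonalConj hUS, sq]
  have hT : (2 * β) • (S * S) - (β ^ 2) • (US * USᵀ) - (β ^ 2) • (S * S) -
      (4 * β ^ 6 / α ^ 2) • (S * S) =
      diagonalConj US (fun k => β * ((2 - β - 4 * β ^ 5 / α ^ 2) * SigS k ^ 2 - β)) := by
    rw [hSS, ← diagonalConj_one, ← map_smul, ← map_smul, ← map_smul, ← map_smul, ← map_sub,
      ← map_sub, ← map_sub]
    congr 1
    funext k
    simp only [Pi.sub_apply, Pi.smul_apply, Pi.pow_apply, Pi.one_apply, smul_eq_mul]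
    ring
  rw [hT]
  exact posSemidef_diagonalConj US fun k =>
    mul_sub_nonneg_of_le_mul_sq hβ.le (hSigS k₀).le (hσmin_le k) hcond

/-- if `S = U_S Σ_S U_Sᵀ` is a compact eigendecomposition of a positive
semidefinite matrix, `σ_S^min` is its smallest positive eigenvalue, and
`(2 − β − 4β⁵/α²)·(σ_S^min)² ≥ β` with `α, β > 0`, then
`T_ψ = 2β·SS − β²·U_SU_Sᵀ − β²·SS − (4β⁶/α²)·SS` is positive semidefinite. -/
theorem Tpsi_posSemidef
    {n rS : ℕ}
    (S : Matrix (Fin n) (Fin n) ℝ) (hSpsd : S.PosSemidef)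
    (US : Matrix (Fin n) (Fin rS) ℝ) (SigS : Fin rS → ℝ)
    (hSigS : ∀ k, 0 < SigS k)
    (hSdec : S = US * Matrix.diagonal SigS * USᵀ)
    (hUS : USᵀ * US = 1)
    -- σ_S^min is the smallest diagonal entry of Σ_S
    (σmin : ℝ) (hσmin_le : ∀ k, σmin ≤ SigS k) (hσmin_mem : ∃ k, SigS k = σmin)
    (α β : ℝ) (hα : 0 < α) (hβ : 0 < β)
    (hcond : β ≤ (2 - β - 4 * β ^ 5 / α ^ 2) * σmin ^ 2) :
    ((2 * β) • (S * S) - (β ^ 2) • (US * USᵀ) - (β ^ 2) • (S * S) -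
      (4 * β ^ 6 / α ^ 2) • (S * S)).PosSemidef :=
  Tpsi_posSemidef_general S US SigS hSigS hSdec hUS σmin hσmin_le hσmin_mem α β hβ hcond
end

section
/- Let 0 < u ≤ ℓ. There exists β₀ > 0 such that for every β ∈ (0, β₀) there exists α₀ > 0 such that for every α ≥ α₀ and every diagonal matrix C ∈ ℝ^{n×n} with u·I ⪯ C ⪯ ℓ·I, the 2×2 block matrix H₂(C) := [[T_d(C), F₂ᵀ + (1/(2α)) I_oᵀ A_G], [F₂ + (1/(2α)) A_Gᵀ I_o, T_P]] is positive semidefinite, where T_d(C) := (1/(2α))·(2αC + 2αF₁ − (2 + β²)I) − ((β − 1)²/(2αβ²))·I − (1/(2α))·I − (2/α)·L(C)² with L(C) := −C − F₁ + (β²/α)·I, and T_P := (1/(2α))·(2αF₃ + 2A_Gᵀ A_G − β² U_A U_Aᵀ) − (β²/(2α))·U_A U_Aᵀ − (2/α)·F₂ F₂ᵀ. -/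
open Matrix Finset

/-- The undirected graph underlying the directed lines `ends`. -/
def incGraph {nG nL m : ℕ} (ends : Fin m → (Fin nG ⊕ Fin nL) × (Fin nG ⊕ Fin nL)) :
    SimpleGraph (Fin nG ⊕ Fin nL) :=
  SimpleGraph.fromRel (fun i j => ∃ e, ends e = (i, j))

/-- `F₁ = blockdiag(0_{|G|}, D_L⁻¹)`. -/
noncomputable def F1mat {nG nL : ℕ} (DL : Fin nL → ℝ) :
    Matrix (Fin nG ⊕ Fin nL) (Fin nG ⊕ Fin nL) ℝ :=
  fun i j => match i, j with
  | Sum.inr a, Sum.inr b => if a = b then (DL a)⁻¹ else 0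
  | _, _ => 0

/-- `F₂ = [0, A_Lᵀ D_L⁻¹]`. -/
noncomputable def F2mat {nG nL m : ℕ} (A : Matrix (Fin nG ⊕ Fin nL) (Fin m) ℝ)
    (DL : Fin nL → ℝ) : Matrix (Fin m) (Fin nG ⊕ Fin nL) ℝ :=
  fun e i => match i with
  | Sum.inr a => A (Sum.inr a) e * (DL a)⁻¹
  | _ => 0

/-- `F₃ = A_Lᵀ D_L⁻¹ A_L`. -/
noncomputable def F3mat {nG nL m : ℕ} (A : Matrix (Fin nG ⊕ Fin nL) (Fin m) ℝ)
    (DL : Fin nL → ℝ) : Matrix (Fin m) (Fin m) ℝ :=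
  fun e f => ∑ a : Fin nL, A (Sum.inr a) e * (DL a)⁻¹ * A (Sum.inr a) f

/-- `I_o = [I, 0]`, the projection onto the generator components. -/
def IoMat {nG nL : ℕ} : Matrix (Fin nG) (Fin nG ⊕ Fin nL) ℝ :=
  fun j i => if i = Sum.inl j then 1 else 0

/-- The generator-bus rows `A_G` of `A`. -/
def AGmat {nG nL m : ℕ} (A : Matrix (Fin nG ⊕ Fin nL) (Fin m) ℝ) :
    Matrix (Fin nG) (Fin m) ℝ := fun j e => A (Sum.inl j) e

/-!
Since `F₂ = AᵀF₁`, `F₃ = AᵀF₁A` and `A_G = I_o A`, every block of `H₂(C)` is a diagonal matrix,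
possibly sandwiched by `A`. With `N = diag(I, A)` this gives
`H₂(C) = Nᵀ [[P, Q], [Q, R]] N + diag(0, (AᵀA - 2β² U_A U_Aᵀ) / (2α))`
with `P`, `Q`, `R` diagonal. The SVD gives `AᵀA = U_A Σ² U_Aᵀ ⪰ 2β² U_A U_Aᵀ` as soon as
`2β² ≤ σ_k²` for all `k`, which fixes `β₀`. The middle matrix splits into one `2 × 2` block per bus:
at a generator bus it is `[[C_ii + O(1/α), 1/(2α)], [1/(2α), 1/(2α)]]`, at a load bus, with
`d = 1/D_i`, it is `[[C_ii + d + O(1/α), d], [d, d - O(1/α)]]`; both are positive semidefinite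
once `α` is large, uniformly in `u ≤ C_ii ≤ ℓ`.
-/

open Filter

section BlockMatrices

variable {ι m : Type*} [Fintype ι] [Fintype m]

theorem Matrix.PosSemidef.fromBlocks_zero₁₂_zero₂₁ {R : Type*} [CommRing R] [PartialOrder R]
    [StarRing R] [StarOrderedRing R] {A : Matrix ι ι R} {D : Matrix m m R}
    (hA : A.PosSemidef) (hD : D.PosSemidef) : (fromBlocks A 0 0 D).PosSemidef := by
  rw [posSemidef_iff_dotProduct_mulVec] at *
  refine ⟨hA.1.fromBlocks (by simp) hD.1, fun z => ?_⟩
  obtain ⟨x, y, rfl⟩ : ∃ x y, z = Sum.elim x y := ⟨_, _, (Sum.elim_comp_inl_inr z).symm⟩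
  simpa [fromBlocks_mulVec, Function.star_sumElim] using add_nonneg (hA.2 x) (hD.2 y)

variable [DecidableEq ι]

theorem posSemidef_fromBlocks_diagonal {p q r : ι → ℝ}
    (h : ∀ i s t, 0 ≤ p i * s ^ 2 + 2 * q i * s * t + r i * t ^ 2) :
    (fromBlocks (diagonal p) (diagonal q) (diagonal q) (diagonal r)).PosSemidef := by
  rw [posSemidef_iff_dotProduct_mulVec]
  refine ⟨.fromBlocks (isHermitian_diagonal_of_self_adjoint _ rfl) (by simp)
    (isHermitian_diagonal_of_self_adjoint _ rfl), fun z => ?_⟩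
  obtain ⟨x, y, rfl⟩ : ∃ x y, z = Sum.elim x y := ⟨_, _, (Sum.elim_comp_inl_inr z).symm⟩
  simp only [fromBlocks_mulVec, star_trivial, Sum.elim_comp_inl, Sum.elim_comp_inr,
    sumElim_dotProduct_sumElim]
  simp only [dotProduct, mulVec_diagonal, Pi.add_apply, ← sum_add_distrib]
  exact sum_nonneg fun i _ => by linear_combination h i (x i) (y i)

theorem posSemidef_fromBlocks_diagonal_mul (A : Matrix ι m ℝ) {p q r : ι → ℝ}
    {M : Matrix m m ℝ} (h : ∀ i s t, 0 ≤ p i * s ^ 2 + 2 * q i * s * t + r i * t ^ 2)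
    (hM : M.PosSemidef) :
    (fromBlocks (diagonal p) (diagonal q * A) (Aᵀ * diagonal q)
      (Aᵀ * diagonal r * A + M)).PosSemidef := by
  have hN : fromBlocks (diagonal p) (diagonal q * A) (Aᵀ * diagonal q)
      (Aᵀ * diagonal r * A + M) =
      (fromBlocks 1 0 0 A : Matrix (ι ⊕ ι) (ι ⊕ m) ℝ)ᴴ *
        (fromBlocks (diagonal p) (diagonal q) (diagonal q) (diagonal r) :
          Matrix (ι ⊕ ι) (ι ⊕ ι) ℝ) *
        (fromBlocks 1 0 0 A : Matrix (ι ⊕ ι) (ι ⊕ m) ℝ) + fromBlocks 0 0 0 M := by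
    simp [fromBlocks_transpose, fromBlocks_multiply, fromBlocks_add,
      conjTranspose_eq_transpose_of_trivial]
  rw [hN]
  exact ((posSemidef_fromBlocks_diagonal h).conjTranspose_mul_mul_same _).add
    (PosSemidef.zero.fromBlocks_zero₁₂_zero₂₁ hM)

end BlockMatrices

theorem exists_pos_forall_le {ι : Type*} [Finite ι] {f : ι → ℝ} (hf : ∀ i, 0 < f i) :
    ∃ c > 0, ∀ i, c ≤ f i := by
  have : ∀ᶠ c in nhdsWithin (0 : ℝ) (Set.Ioi 0), ∀ i, c ≤ f i :=
    eventually_all.2 fun i => nhdsWithin_le_nhds (eventually_le_nhds (hf i))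
  exact (this.and self_mem_nhdsWithin).exists.imp fun c h => ⟨h.2, h.1⟩

theorem posSemidef_transpose_mul_self_sub_smul_of_svd {n m r : Type*} [Fintype n] [Fintype m]
    [Fintype r] [DecidableEq r] {A : Matrix n m ℝ} {V : Matrix n r ℝ} {σ : r → ℝ}
    {U : Matrix m r ℝ} (hA : A = V * diagonal σ * Uᵀ) (hV : Vᵀ * V = 1) {c : ℝ}
    (hc : ∀ k, c ≤ σ k ^ 2) : (Aᵀ * A - c • (U * Uᵀ)).PosSemidef := by
  have hσ : diagonal (fun k => σ k ^ 2 - c) = diagonal σ * diagonal σ - c • 1 := by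
    ext i j
    rcases eq_or_ne i j with rfl | h <;> simp [sq, one_apply, *]
  have hAA : Aᵀ * A - c • (U * Uᵀ) = U * diagonal (fun k => σ k ^ 2 - c) * Uᵀ := by
    rw [hσ, hA]
    simp only [transpose_mul, diagonal_transpose, transpose_transpose, Matrix.mul_sub,
      Matrix.sub_mul, Matrix.mul_assoc, Matrix.mul_smul, Matrix.smul_mul, Matrix.mul_one]
    rw [← Matrix.mul_assoc Vᵀ, hV, Matrix.one_mul]
  rw [hAA, ← conjTranspose_eq_transpose_of_trivial]
  exact (PosSemidef.diagonal fun k => sub_nonneg.2 (hc k)).mul_mul_conjTranspose_same U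

section NetworkMatrices

variable {nG nL m r : ℕ}

noncomputable def F1diag (DL : Fin nL → ℝ) : Fin nG ⊕ Fin nL → ℝ :=
  Sum.elim 0 fun a => (DL a)⁻¹

/- Products below carry explicit index types (`F1mat (nG := nG)`, type ascriptions): otherwise
elaboration picks the `CStarMatrix` multiplication, on which the `Matrix` lemmas do not fire. -/

theorem F1mat_eq_diagonal (DL : Fin nL → ℝ) :
    F1mat (nG := nG) DL = diagonal (F1diag DL) := by
  ext (i | a) (j | b) <;> simp [F1mat, F1diag, diagonal_apply]

theorem F2mat_eq (A : Matrix (Fin nG ⊕ Fin nL) (Fin m) ℝ) (DL : Fin nL → ℝ) :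
    F2mat A DL = Aᵀ * F1mat (nG := nG) DL := by
  ext e (i | a) <;> simp [F2mat, F1mat_eq_diagonal, F1diag]

theorem F3mat_eq (A : Matrix (Fin nG ⊕ Fin nL) (Fin m) ℝ) (DL : Fin nL → ℝ) :
    F3mat A DL = Aᵀ * F1mat (nG := nG) DL * A := by
  ext e f
  rw [Matrix.mul_apply]
  simp [F3mat, F1mat_eq_diagonal, F1diag, Fintype.sum_sum_type]

theorem AGmat_eq (A : Matrix (Fin nG ⊕ Fin nL) (Fin m) ℝ) :
    AGmat A = IoMat (nG := nG) (nL := nL) * A := by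
  ext j e
  simp [AGmat, IoMat, Matrix.mul_apply]

theorem IoMat_transpose_mul_self :
    (IoMat (nG := nG) (nL := nL))ᵀ * IoMat (nG := nG) (nL := nL) =
      diagonal (Sum.elim 1 0) := by
  ext (i | a) (j | b) <;> simp [IoMat, Matrix.mul_apply, diagonal_apply]

theorem AGmat_transpose_mul_self (A : Matrix (Fin nG ⊕ Fin nL) (Fin m) ℝ) :
    (AGmat A)ᵀ * AGmat A = Aᵀ * diagonal (Sum.elim 1 0 : Fin nG ⊕ Fin nL → ℝ) * A := by
  rw [AGmat_eq, transpose_mul, Matrix.mul_assoc, ← Matrix.mul_assoc _ IoMat,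
    IoMat_transpose_mul_self, Matrix.mul_assoc]

theorem F2mat_mul_transpose_self (A : Matrix (Fin nG ⊕ Fin nL) (Fin m) ℝ) (DL : Fin nL → ℝ) :
    F2mat A DL * (F2mat A DL)ᵀ = Aᵀ * diagonal (F1diag (nG := nG) DL * F1diag DL) * A := by
  rw [F2mat_eq, F1mat_eq_diagonal, transpose_mul, diagonal_transpose, transpose_transpose,
    Matrix.mul_assoc, ← Matrix.mul_assoc (diagonal _), diagonal_mul_diagonal, Matrix.mul_assoc]
  rfl

noncomputable def Tdmat (DL : Fin nL → ℝ) (α β : ℝ) (cvec : Fin nG ⊕ Fin nL → ℝ) :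
    Matrix (Fin nG ⊕ Fin nL) (Fin nG ⊕ Fin nL) ℝ :=
  (1 / (2 * α)) • ((2 * α) • diagonal cvec + (2 * α) • F1mat DL - (2 + β ^ 2) • 1) -
    ((β - 1) ^ 2 / (2 * α * β ^ 2)) • 1 - (1 / (2 * α)) • 1 -
    (2 / α) • ((-diagonal cvec - F1mat DL + (β ^ 2 / α) • 1) *
      (-diagonal cvec - F1mat DL + (β ^ 2 / α) • 1))

noncomputable def TPmat (A : Matrix (Fin nG ⊕ Fin nL) (Fin m) ℝ) (DL : Fin nL → ℝ)
    (UA : Matrix (Fin m) (Fin r) ℝ) (α β : ℝ) : Matrix (Fin m) (Fin m) ℝ :=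
  (1 / (2 * α)) • ((2 * α) • F3mat A DL + (2 : ℝ) • ((AGmat A)ᵀ * AGmat A) -
      β ^ 2 • (UA * UAᵀ)) -
    (β ^ 2 / (2 * α)) • (UA * UAᵀ) - (2 / α) • (F2mat A DL * (F2mat A DL)ᵀ)

noncomputable def H2mat (A : Matrix (Fin nG ⊕ Fin nL) (Fin m) ℝ) (DL : Fin nL → ℝ)
    (UA : Matrix (Fin m) (Fin r) ℝ) (α β : ℝ) (cvec : Fin nG ⊕ Fin nL → ℝ) :
    Matrix ((Fin nG ⊕ Fin nL) ⊕ Fin m) ((Fin nG ⊕ Fin nL) ⊕ Fin m) ℝ :=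
  fromBlocks (Tdmat DL α β cvec)
    ((F2mat A DL)ᵀ + (1 / (2 * α)) • ((IoMat (nG := nG) (nL := nL))ᵀ * AGmat A))
    (F2mat A DL + (1 / (2 * α)) • ((AGmat A)ᵀ * IoMat (nG := nG) (nL := nL)))
    (TPmat A DL UA α β)

/- Diagonal entries of `P`, `Q`, `R` at a bus with `C_ii = c`, `(F₁)_ii = d`, and `γ = 1` at a
generator, `γ = 0` at a load. -/

noncomputable def H2diag₁₁ (α β c d : ℝ) : ℝ :=
  c + d - ((3 + β ^ 2) / 2 + (β - 1) ^ 2 / (2 * β ^ 2) + 2 * (c + d - β ^ 2 / α) ^ 2) / α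

noncomputable def H2diag₁₂ (α d γ : ℝ) : ℝ := d + γ / (2 * α)

noncomputable def H2diag₂₂ (α d γ : ℝ) : ℝ := d + (γ - 1 / 2 - 2 * d ^ 2) / α

theorem Tdmat_eq_diagonal (DL : Fin nL → ℝ) {α : ℝ} (hα : α ≠ 0) (β : ℝ)
    (cvec : Fin nG ⊕ Fin nL → ℝ) :
    Tdmat DL α β cvec = diagonal fun i => H2diag₁₁ α β (cvec i) (F1diag DL i) := by
  rw [Tdmat, F1mat_eq_diagonal]
  simp only [← diagonal_one, ← diagonal_smul, diagonal_add, diagonal_sub, diagonal_neg,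
    diagonal_mul_diagonal]
  congr 1
  funext i
  simp only [Pi.smul_apply, smul_eq_mul, H2diag₁₁]
  field_simp
  ring

theorem F2mat_transpose_add_eq (A : Matrix (Fin nG ⊕ Fin nL) (Fin m) ℝ) (DL : Fin nL → ℝ)
    (α : ℝ) :
    (F2mat A DL)ᵀ + (1 / (2 * α)) • ((IoMat (nG := nG) (nL := nL))ᵀ * AGmat A) =
      diagonal (fun i : Fin nG ⊕ Fin nL => H2diag₁₂ α (F1diag DL i) (Sum.elim 1 0 i)) * A := by
  rw [F2mat_eq, AGmat_eq, ← Matrix.mul_assoc, IoMat_transpose_mul_self, F1mat_eq_diagonal,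
    transpose_mul, diagonal_transpose, transpose_transpose, ← Matrix.smul_mul, ← Matrix.add_mul,
    ← diagonal_smul, diagonal_add]
  congr 2
  funext i
  simp only [Pi.smul_apply, smul_eq_mul, H2diag₁₂]
  ring

theorem F2mat_add_eq (A : Matrix (Fin nG ⊕ Fin nL) (Fin m) ℝ) (DL : Fin nL → ℝ) (α : ℝ) :
    F2mat A DL + (1 / (2 * α)) • ((AGmat A)ᵀ * IoMat (nG := nG) (nL := nL)) =
      Aᵀ * diagonal (fun i : Fin nG ⊕ Fin nL => H2diag₁₂ α (F1diag DL i) (Sum.elim 1 0 i)) := by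
  rw [← diagonal_transpose, ← transpose_mul, ← F2mat_transpose_add_eq]
  simp [transpose_add, transpose_smul, transpose_mul]

theorem TPmat_eq (A : Matrix (Fin nG ⊕ Fin nL) (Fin m) ℝ) (DL : Fin nL → ℝ)
    (UA : Matrix (Fin m) (Fin r) ℝ) {α : ℝ} (hα : α ≠ 0) (β : ℝ) :
    TPmat A DL UA α β =
      Aᵀ * diagonal (fun i : Fin nG ⊕ Fin nL => H2diag₂₂ α (F1diag DL i) (Sum.elim 1 0 i)) * A +
        (2 * α)⁻¹ • (Aᵀ * A - (2 * β ^ 2) • (UA * UAᵀ)) := by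
  have hR : diagonal (fun i : Fin nG ⊕ Fin nL => H2diag₂₂ α (F1diag DL i) (Sum.elim 1 0 i)) =
      diagonal (F1diag DL) + α⁻¹ • diagonal (Sum.elim 1 0) - (2 * α)⁻¹ • 1 -
        (2 / α) • diagonal (F1diag DL * F1diag DL) := by
    ext i j
    rcases eq_or_ne i j with rfl | h
    · simp only [diagonal_apply_eq, Matrix.sub_apply, Matrix.add_apply, Matrix.smul_apply,
        smul_eq_mul, one_apply_eq, Pi.mul_apply, H2diag₂₂]
      ring
    · simp [h]
  rw [TPmat, F3mat_eq, AGmat_transpose_mul_self, F2mat_mul_transpose_self, F1mat_eq_diagonal, hR]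
  simp only [Matrix.mul_add, Matrix.add_mul, Matrix.mul_sub, Matrix.sub_mul, Matrix.mul_smul,
    Matrix.smul_mul, Matrix.mul_one]
  match_scalars <;> field_simp <;> ring

end NetworkMatrices

theorem sub_le_mul_H2diag₁₁_sub {α β c d ℓ : ℝ} (hα : 1 ≤ α) (hc : 0 ≤ c) (hcℓ : c ≤ ℓ)
    (hd : 0 ≤ d) :
    α * c - ((3 + β ^ 2) / 2 + (β - 1) ^ 2 / (2 * β ^ 2) + 2 * (ℓ + d + β ^ 2) ^ 2) ≤
      α * (H2diag₁₁ α β c d - d) := by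
  have hdiag : α * (H2diag₁₁ α β c d - d) =
      α * c - ((3 + β ^ 2) / 2 + (β - 1) ^ 2 / (2 * β ^ 2) + 2 * (c + d - β ^ 2 / α) ^ 2) := by
    rw [H2diag₁₁]; field_simp; ring
  have h0 : 0 ≤ β ^ 2 / α := by positivity
  have h1 : β ^ 2 / α ≤ β ^ 2 := div_le_self (sq_nonneg β) hα
  have hsq : (c + d - β ^ 2 / α) ^ 2 ≤ (ℓ + d + β ^ 2) ^ 2 :=
    sq_le_sq' (by linarith) (by linarith)
  linarith

theorem eventually_le_mul_H2diag₁₁_sub {u : ℝ} (hu : 0 < u) (β ℓ : ℝ) {d : ℝ} (hd : 0 ≤ d) :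
    ∀ᶠ α in atTop, ∀ c, u ≤ c → c ≤ ℓ → 4 * d ^ 2 + 1 ≤ α * (H2diag₁₁ α β c d - d) := by
  filter_upwards [eventually_ge_atTop 1, eventually_ge_atTop
    (((3 + β ^ 2) / 2 + (β - 1) ^ 2 / (2 * β ^ 2) + 2 * (ℓ + d + β ^ 2) ^ 2 + 4 * d ^ 2 + 1) / u)]
    with α h1 h2 c hcu hcℓ
  have hc := sub_le_mul_H2diag₁₁_sub (β := β) h1 (hu.le.trans hcu) hcℓ hd
  have hαu := (div_le_iff₀ hu).1 h2
  nlinarith [mul_le_mul_of_nonneg_left hcu (by linarith : (0 : ℝ) ≤ α)]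

theorem quad_nonneg_of_generator {α p : ℝ} (hα : 0 < α) (hp : 1 / 2 ≤ α * p) (s t : ℝ) :
    0 ≤ p * s ^ 2 + 2 * H2diag₁₂ α 0 1 * s * t + H2diag₂₂ α 0 1 * t ^ 2 := by
  have key : α * (p * s ^ 2 + 2 * H2diag₁₂ α 0 1 * s * t + H2diag₂₂ α 0 1 * t ^ 2) =
      (α * p - 1 / 2) * s ^ 2 + (s + t) ^ 2 / 2 := by
    simp only [H2diag₁₂, H2diag₂₂]; field_simp; ring
  have : 0 ≤ α * (p * s ^ 2 + 2 * H2diag₁₂ α 0 1 * s * t + H2diag₂₂ α 0 1 * t ^ 2) := by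
    rw [key]; have := sub_nonneg.2 hp; positivity
  exact nonneg_of_mul_nonneg_right (by linarith) hα

theorem quad_nonneg_of_load {α p d : ℝ} (hα : 0 < α) (hp : 4 * d ^ 2 + 1 ≤ α * (p - d))
    (hd : 4 * d ^ 2 + 1 ≤ α * d) (s t : ℝ) :
    0 ≤ p * s ^ 2 + 2 * H2diag₁₂ α d 0 * s * t + H2diag₂₂ α d 0 * t ^ 2 := by
  have key : α * (p * s ^ 2 + 2 * H2diag₁₂ α d 0 * s * t + H2diag₂₂ α d 0 * t ^ 2) =
      α * (p - d) * s ^ 2 + α * d * (s + t) ^ 2 - (1 / 2 + 2 * d ^ 2) * t ^ 2 := by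
    simp only [H2diag₁₂, H2diag₂₂]; field_simp; ring
  have ht : t ^ 2 ≤ 2 * (s + t) ^ 2 + 2 * s ^ 2 := by nlinarith [sq_nonneg (2 * s + t)]
  have : 0 ≤ α * (p * s ^ 2 + 2 * H2diag₁₂ α d 0 * s * t + H2diag₂₂ α d 0 * t ^ 2) := by
    rw [key]
    nlinarith [mul_le_mul_of_nonneg_right hp (sq_nonneg s),
      mul_le_mul_of_nonneg_right hd (sq_nonneg (s + t)),
      mul_le_mul_of_nonneg_left ht (by positivity : (0 : ℝ) ≤ 1 / 2 + 2 * d ^ 2)]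
  exact nonneg_of_mul_nonneg_right (by linarith) hα

theorem eventually_H2diag_quad_nonneg {nG nL : ℕ} {DL : Fin nL → ℝ} (hDL : ∀ a, 0 < DL a)
    {u : ℝ} (hu : 0 < u) (β ℓ : ℝ) (i : Fin nG ⊕ Fin nL) :
    ∀ᶠ α in atTop, ∀ c, u ≤ c → c ≤ ℓ → ∀ s t,
      0 ≤ H2diag₁₁ α β c (F1diag DL i) * s ^ 2 +
        2 * H2diag₁₂ α (F1diag DL i) (Sum.elim 1 0 i) * s * t +
        H2diag₂₂ α (F1diag DL i) (Sum.elim 1 0 i) * t ^ 2 := by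
  rcases i with j | b
  · filter_upwards [eventually_gt_atTop 0, eventually_le_mul_H2diag₁₁_sub hu β ℓ le_rfl]
      with α hα h c hcu hcℓ s t
    simpa [F1diag] using quad_nonneg_of_generator hα (by linarith [h c hcu hcℓ]) s t
  · have hd := hDL b
    filter_upwards [eventually_gt_atTop 0, eventually_ge_atTop (4 * (DL b)⁻¹ + DL b),
      eventually_le_mul_H2diag₁₁_sub hu β ℓ (inv_nonneg.2 hd.le)] with α hα hα' h c hcu hcℓ s t
    refine quad_nonneg_of_load hα (h c hcu hcℓ) ?_ s t
    have := mul_le_mul_of_nonneg_right hα' (inv_nonneg.2 hd.le)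
    rw [add_mul, mul_inv_cancel₀ hd.ne'] at this
    linarith

theorem H2_posSemidef_general
    {nG nL m r : ℕ}
    (A : Matrix (Fin nG ⊕ Fin nL) (Fin m) ℝ)
    -- positive damping
    (DL : Fin nL → ℝ)
    (hDL : ∀ i, 0 < DL i)
    -- compact SVD of A
    (VA : Matrix (Fin nG ⊕ Fin nL) (Fin r) ℝ) (SigA : Fin r → ℝ)
    (UA : Matrix (Fin m) (Fin r) ℝ)
    (hSigA : ∀ k, 0 < SigA k)
    (hAdec : A = VA * Matrix.diagonal SigA * UAᵀ)
    (hVA : VAᵀ * VA = 1)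
    -- the bounds 0 < u ≤ ℓ
    (u ℓ : ℝ) (hu : 0 < u) :
    ∃ β₀ : ℝ, 0 < β₀ ∧ ∀ β : ℝ, 0 < β → β < β₀ →
      ∃ α₀ : ℝ, 0 < α₀ ∧ ∀ α : ℝ, α₀ ≤ α →
        ∀ cvec : (Fin nG ⊕ Fin nL) → ℝ, (∀ i, u ≤ cvec i ∧ cvec i ≤ ℓ) →
          (Matrix.fromBlocks
            -- T_d(C)
            ((1 / (2 * α)) • ((2 * α) • Matrix.diagonal cvec +
                (2 * α) • (F1mat DL : Matrix (Fin nG ⊕ Fin nL) (Fin nG ⊕ Fin nL) ℝ) -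
                (2 + β ^ 2) • (1 : Matrix (Fin nG ⊕ Fin nL) (Fin nG ⊕ Fin nL) ℝ)) -
              ((β - 1) ^ 2 / (2 * α * β ^ 2)) • 1 - (1 / (2 * α)) • 1 -
              (2 / α) • ((-(Matrix.diagonal cvec) - F1mat DL + (β ^ 2 / α) • 1) *
                (-(Matrix.diagonal cvec) - F1mat DL + (β ^ 2 / α) • 1)))
            -- F₂ᵀ + (1/(2α)) I_oᵀ A_G
            ((F2mat A DL)ᵀ + (1 / (2 * α)) • ((IoMat)ᵀ * AGmat A))
            -- F₂ + (1/(2α)) A_Gᵀ I_o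
            (F2mat A DL + (1 / (2 * α)) • ((AGmat A)ᵀ * IoMat))
            -- T_P
            ((1 / (2 * α)) • ((2 * α) • F3mat A DL + (2 : ℝ) • ((AGmat A)ᵀ * AGmat A) -
                (β ^ 2) • (UA * UAᵀ)) -
              (β ^ 2 / (2 * α)) • (UA * UAᵀ) -
              (2 / α) • (F2mat A DL * (F2mat A DL)ᵀ))).PosSemidef := by
  obtain ⟨c, hc, hcσ⟩ := exists_pos_forall_le fun k => pow_pos (hSigA k) 2
  refine ⟨√(c / 2), by positivity, fun β hβ hββ₀ => ?_⟩
  have hβσ : ∀ k, 2 * β ^ 2 ≤ SigA k ^ 2 := fun k => by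
    have := (Real.lt_sqrt hβ.le).1 hββ₀
    linarith [hcσ k]
  obtain ⟨α₀, hα₀⟩ := eventually_atTop.1 ((eventually_all.2 fun i =>
    eventually_H2diag_quad_nonneg hDL hu β ℓ i).and (eventually_gt_atTop 0))
  refine ⟨max α₀ 1, by positivity, fun α hα cvec hcvec => ?_⟩
  obtain ⟨hquad, hα⟩ := hα₀ α (le_of_max_le_left hα)
  change (H2mat A DL UA α β cvec).PosSemidef
  rw [H2mat, Tdmat_eq_diagonal DL hα.ne', F2mat_transpose_add_eq, F2mat_add_eq,
    TPmat_eq A DL UA hα.ne']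
  exact posSemidef_fromBlocks_diagonal_mul A (fun i => hquad i _ (hcvec i).1 (hcvec i).2)
    ((posSemidef_transpose_mul_self_sub_smul_of_svd hAdec hVA hβσ).smul (by positivity))

/-- for all sufficiently small `β > 0` and sufficiently large `α`, the 2×2
block matrix `H₂(C)` is positive semidefinite for every diagonal `C` with `uI ⪯ C ⪯ ℓI`. -/
theorem H2_posSemidef
    {nG nL m r : ℕ}
    -- A is the node–branch incidence matrix of a connected directed graph
    (ends : Fin m → (Fin nG ⊕ Fin nL) × (Fin nG ⊕ Fin nL))
    (hloop : ∀ e, (ends e).1 ≠ (ends e).2)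
    (hconn : (incGraph ends).Connected)
    (A : Matrix (Fin nG ⊕ Fin nL) (Fin m) ℝ)
    (hA : ∀ i e, A i e =
      (if (ends e).1 = i then 1 else 0) - (if (ends e).2 = i then 1 else 0))
    -- positive damping
    (DG : Fin nG → ℝ) (DL : Fin nL → ℝ)
    (hDG : ∀ i, 0 < DG i) (hDL : ∀ i, 0 < DL i)
    -- compact SVD of A
    (VA : Matrix (Fin nG ⊕ Fin nL) (Fin r) ℝ) (SigA : Fin r → ℝ)
    (UA : Matrix (Fin m) (Fin r) ℝ)
    (hSigA : ∀ k, 0 < SigA k)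
    (hAdec : A = VA * Matrix.diagonal SigA * UAᵀ)
    (hVA : VAᵀ * VA = 1) (hUA : UAᵀ * UA = 1)
    -- the bounds 0 < u ≤ ℓ
    (u ℓ : ℝ) (hu : 0 < u) (hul : u ≤ ℓ) :
    ∃ β₀ : ℝ, 0 < β₀ ∧ ∀ β : ℝ, 0 < β → β < β₀ →
      ∃ α₀ : ℝ, 0 < α₀ ∧ ∀ α : ℝ, α₀ ≤ α →
        ∀ cvec : (Fin nG ⊕ Fin nL) → ℝ, (∀ i, u ≤ cvec i ∧ cvec i ≤ ℓ) →
          (Matrix.fromBlocks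
            -- T_d(C)
            ((1 / (2 * α)) • ((2 * α) • Matrix.diagonal cvec +
                (2 * α) • (F1mat DL : Matrix (Fin nG ⊕ Fin nL) (Fin nG ⊕ Fin nL) ℝ) -
                (2 + β ^ 2) • (1 : Matrix (Fin nG ⊕ Fin nL) (Fin nG ⊕ Fin nL) ℝ)) -
              ((β - 1) ^ 2 / (2 * α * β ^ 2)) • 1 - (1 / (2 * α)) • 1 -
              (2 / α) • ((-(Matrix.diagonal cvec) - F1mat DL + (β ^ 2 / α) • 1) *
                (-(Matrix.diagonal cvec) - F1mat DL + (β ^ 2 / α) • 1)))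
            -- F₂ᵀ + (1/(2α)) I_oᵀ A_G
            ((F2mat A DL)ᵀ + (1 / (2 * α)) • ((IoMat)ᵀ * AGmat A))
            -- F₂ + (1/(2α)) A_Gᵀ I_o
            (F2mat A DL + (1 / (2 * α)) • ((AGmat A)ᵀ * IoMat))
            -- T_P
            ((1 / (2 * α)) • ((2 * α) • F3mat A DL + (2 : ℝ) • ((AGmat A)ᵀ * AGmat A) -
                (β ^ 2) • (UA * UAᵀ)) -
              (β ^ 2 / (2 * α)) • (UA * UAᵀ) -
              (2 / α) • (F2mat A DL * (F2mat A DL)ᵀ))).PosSemidef :=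
  H2_posSemidef_general A DL hDL VA SigA UA hSigA hAdec hVA u ℓ hu
end
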